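/- Let G be a (not necessarily finitely generated) subgroup of germs of holomorphic diffeomorphisms at 0 ∈ ℂᵏ and suppose there is ℓ ∈ ℕ such that for every x sufficiently close to 0, the pseudo-orbit of x under G is periodic of order ≤ ℓ. Then G is finite. -/

import Mathlib

/-! Uniformly bounded orbit periods give every element of the group the common period `n = ℓ!`.
An element `φ` with `φ^[n] = id` near `0` and `Dφ(0) = 1` is the identity: the average
`h = n⁻¹ ∑_{j<n} φ^[j]` is a local diffeomorphism with `h ∘ φ = h`. Hence `g ↦ Dg(0)` is
injective on the group, whose image is a linear group of exponent `n`. Such a linear group is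
finite (Burnside): traces of its elements are sums of `n`-th roots of unity, hence take finitely
many values, and an element is determined by its traces against a basis of the span of the group,
because an element of exponent `n` and trace `dim` is the identity. -/

open Filter MeasureTheory Set Function

/-- The germ at `0 ∈ ℂᵏ` of a map `ℂᵏ → ℂᵏ`. -/
noncomputable def germ0 (k : ℕ) (f : (Fin k → ℂ) → (Fin k → ℂ)) :
    Filter.Germ (nhds (0 : Fin k → ℂ)) (Fin k → ℂ) :=
  Filter.Germ.ofFun f

/-- `g` is the germ at `0` of a holomorphic diffeomorphism of `(ℂᵏ, 0)`,
i.e. of a biholomorphism between neighborhoods of `0` fixing `0`. -/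
def IsHolDiffGerm (k : ℕ) (g : Filter.Germ (nhds (0 : Fin k → ℂ)) (Fin k → ℂ)) : Prop :=
  ∃ f finv : (Fin k → ℂ) → (Fin k → ℂ),
    g = germ0 k f ∧ AnalyticAt ℂ f 0 ∧ f 0 = 0 ∧ AnalyticAt ℂ finv 0 ∧ finv 0 = 0 ∧
    (∀ᶠ x in nhds (0 : Fin k → ℂ), finv (f x) = x) ∧
    (∀ᶠ x in nhds (0 : Fin k → ℂ), f (finv x) = x)

/-- `S` is a subgroup of the group `Diff(ℂᵏ,0)` of germs at `0` of holomorphic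
diffeomorphisms fixing `0`: it consists of such germs, contains the identity germ,
and is closed under composition and inversion. -/
structure IsGermDiffSubgroup (k : ℕ)
    (S : Set (Filter.Germ (nhds (0 : Fin k → ℂ)) (Fin k → ℂ))) : Prop where
  id_mem : germ0 k id ∈ S
  holo : ∀ g ∈ S, IsHolDiffGerm k g
  comp_mem : ∀ f g : (Fin k → ℂ) → (Fin k → ℂ),
    germ0 k f ∈ S → germ0 k g ∈ S → germ0 k (f ∘ g) ∈ S
  inv_mem : ∀ f finv : (Fin k → ℂ) → (Fin k → ℂ), germ0 k f ∈ S →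
    (∀ᶠ x in nhds (0 : Fin k → ℂ), finv (f x) = x) →
    (∀ᶠ x in nhds (0 : Fin k → ℂ), f (finv x) = x) → germ0 k finv ∈ S

open Topology Polynomial
open scoped Nat

section Complex

open scoped ComplexOrder

theorem Complex.re_lt_one_of_norm_le_one {z : ℂ} (hz : ‖z‖ ≤ 1) (h1 : z ≠ 1) : z.re < 1 := by
  refine ((re_le_norm z).trans hz).lt_of_ne fun hre => h1 (ext hre ?_)
  have hnonneg : 0 ≤ z := re_eq_norm.1 (le_antisymm (re_le_norm z) (hz.trans hre.ge))
  exact (nonneg_iff.1 hnonneg).2.symm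

theorem Complex.eq_one_of_re_sum_eq_card {s : Multiset ℂ} (hs : ∀ z ∈ s, ‖z‖ ≤ 1)
    (hsum : s.sum.re = Multiset.card s) : ∀ z ∈ s, z = 1 := by
  by_contra! ⟨z, hz, hz1⟩
  have hlt : (s.map re).sum < (s.map fun _ => (1 : ℝ)).sum :=
    Multiset.sum_lt_sum (fun w hw => (re_le_norm w).trans (hs w hw))
      ⟨z, hz, re_lt_one_of_norm_le_one (hs z hz) hz1⟩
  rw [show (s.map re).sum = s.sum.re from (map_multiset_sum reAddGroupHom s).symm] at hlt
  simp [hsum] at hlt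

end Complex

namespace Matrix

variable {ι : Type*} [Fintype ι] [DecidableEq ι]

theorem pow_eq_one_of_isRoot_charpoly {n : ℕ} {A : Matrix ι ι ℂ} (hA : A ^ n = 1) {z : ℂ}
    (hz : A.charpoly.IsRoot z) : z ^ n = 1 := by
  cases isEmpty_or_nonempty ι
  · simp [charpoly_isEmpty] at hz
  have := spectrum.pow_mem_pow A n (mem_spectrum_iff_isRoot_charpoly.2 hz)
  rwa [hA, spectrum.one_eq, Set.mem_singleton_iff] at this

theorem card_roots_charpoly (A : Matrix ι ι ℂ) :
    Multiset.card A.charpoly.roots = Fintype.card ι := by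
  rw [splits_iff_card_roots.1 (IsAlgClosed.splits _), charpoly_natDegree_eq_dim]

theorem charpoly_eq_X_sub_C_pow {A : Matrix ι ι ℂ} {a : ℂ} (h : ∀ z ∈ A.charpoly.roots, z = a) :
    A.charpoly = (X - C a) ^ Fintype.card ι := by
  have hroots : A.charpoly.roots = Multiset.replicate (Fintype.card ι) a := by
    rw [← card_roots_charpoly A]; exact Multiset.eq_replicate_card.2 h
  rw [← prod_multiset_X_sub_C_of_monic_of_roots_card_eq A.charpoly_monic
    (by rw [card_roots_charpoly, charpoly_natDegree_eq_dim]), hroots]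
  simp

theorem eq_one_of_pow_eq_one_of_trace_eq {n : ℕ} (hn : n ≠ 0) {A : Matrix ι ι ℂ}
    (hA : A ^ n = 1) (htr : A.trace = Fintype.card ι) : A = 1 := by
  cases isEmpty_or_nonempty ι
  · exact Subsingleton.elim _ _
  have hroots : ∀ z ∈ A.charpoly.roots, z = 1 := by
    refine Complex.eq_one_of_re_sum_eq_card (fun z hz => ?_) ?_
    · exact (Complex.norm_eq_one_of_pow_eq_one
        (pow_eq_one_of_isRoot_charpoly hA (isRoot_of_mem_roots hz)) hn).le
    · rw [← trace_eq_sum_roots_charpoly, htr, card_roots_charpoly]; simp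
  -- `A` is semisimple: its minimal polynomial divides the separable `X ^ n - 1`.
  have hsq : Squarefree (minpoly ℂ A) :=
    (separable_X_pow_sub_C (1 : ℂ) (by exact_mod_cast hn) one_ne_zero).squarefree.squarefree_of_dvd
      (minpoly.dvd ℂ A (by simp [hA]))
  have hdvd : minpoly ℂ A ∣ X - C 1 := by
    rw [← hsq.dvd_pow_iff_dvd (Fintype.card_ne_zero (α := ι)), ← charpoly_eq_X_sub_C_pow hroots]
    exact minpoly_dvd_charpoly A
  simpa [sub_eq_zero] using aeval_eq_zero_of_dvd_aeval_eq_zero hdvd (minpoly.aeval ℂ A)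

theorem finite_trace_image_setOf_pow_eq_one {n : ℕ} (hn : n ≠ 0) :
    (trace '' {A : Matrix ι ι ℂ | A ^ n = 1}).Finite := by
  refine (((nthRootsFinset n (1 : ℂ)).sym (Fintype.card ι)).finite_toSet.image
    fun s => s.1.sum).subset ?_
  rintro _ ⟨A, hA, rfl⟩
  refine ⟨⟨A.charpoly.roots, card_roots_charpoly A⟩, Finset.mem_sym_iff.2 fun z hz => ?_,
    (trace_eq_sum_roots_charpoly A).symm⟩
  rw [mem_nthRootsFinset (Nat.pos_of_ne_zero hn)]
  exact pow_eq_one_of_isRoot_charpoly hA (isRoot_of_mem_roots hz)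

theorem eq_of_trace_mul_eq {n : ℕ} (hn : n ≠ 0) {G : Submonoid (Matrix ι ι ℂ)}
    (hG : ∀ A ∈ G, A ^ n = 1) {A B : Matrix ι ι ℂ} (hA : A ∈ G) (hB : B ∈ G)
    (h : ∀ X ∈ G, trace (A * X) = trace (B * X)) : A = B := by
  obtain ⟨m, rfl⟩ := Nat.exists_eq_succ_of_ne_zero hn
  have hAB : A * B ^ m = 1 := by
    refine eq_one_of_pow_eq_one_of_trace_eq hn (hG _ (G.mul_mem hA (G.pow_mem hB m))) ?_
    rw [h _ (G.pow_mem hB m), ← pow_succ', hG B hB, trace_one]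
  calc A = A * B ^ m * B := by rw [mul_assoc, ← pow_succ, hG B hB, mul_one]
    _ = B := by rw [hAB, one_mul]

theorem finite_of_pow_eq_one {n : ℕ} (hn : n ≠ 0) (G : Submonoid (Matrix ι ι ℂ))
    (hG : ∀ A ∈ G, A ^ n = 1) : (G : Set (Matrix ι ι ℂ)).Finite := by
  obtain ⟨b, hbG, hspan, hb⟩ := exists_linearIndependent ℂ (G : Set (Matrix ι ι ℂ))
  have : Finite b := hb.setFinite.to_subtype
  let traces : Matrix ι ι ℂ → b → ℂ := fun A X => trace (A * (X : Matrix ι ι ℂ))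
  have hT := finite_trace_image_setOf_pow_eq_one (ι := ι) hn
  refine Set.Finite.of_finite_image (f := traces) ((Set.Finite.pi' fun _ => hT).subset ?_) ?_
  · rintro _ ⟨A, hA, rfl⟩ X
    exact ⟨_, hG _ (G.mul_mem hA (hbG X.2)), rfl⟩
  · intro A hA B hB hAB
    refine eq_of_trace_mul_eq hn hG hA hB fun X hX => ?_
    have : Set.EqOn (traceLinearMap ι ℂ ℂ ∘ₗ LinearMap.mulLeft ℂ A)
        (traceLinearMap ι ℂ ℂ ∘ₗ LinearMap.mulLeft ℂ B) b := fun X hX => congrFun hAB ⟨X, hX⟩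
    exact LinearMap.eqOn_span this (hspan ▸ Submodule.subset_span hX)

end Matrix

section Germ

variable {𝕜 E F G : Type*} [NontriviallyNormedField 𝕜] [NormedAddCommGroup E] [NormedSpace 𝕜 E]
  [NormedAddCommGroup F] [NormedSpace 𝕜 F] [NormedAddCommGroup G] [NormedSpace 𝕜 G]

theorem fderiv_comp_of_eq {g : F → G} {f : E → F} {x : E} {y : F} (hg : DifferentiableAt 𝕜 g y)
    (hf : DifferentiableAt 𝕜 f x) (hy : f x = y) :
    fderiv 𝕜 (g ∘ f) x = (fderiv 𝕜 g y).comp (fderiv 𝕜 f x) := by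
  subst hy
  exact fderiv_comp x hg hf

variable (𝕜) in
noncomputable def germFDeriv {a : E} (g : (𝓝 a).Germ F) : E →L[𝕜] F :=
  g.liftOn (fun f => fderiv 𝕜 f a) fun _ _ h => h.fderiv_eq

variable [CharZero 𝕜] [CompleteSpace E]

theorem eventuallyEq_id_of_iterate_eventuallyEq_id {f : E → E} {a : E} {n : ℕ} (hn : n ≠ 0)
    (hfa : f a = a) (hf : HasStrictFDerivAt f (1 : E →L[𝕜] E) a)
    (hper : f^[n] =ᶠ[𝓝 a] id) : f =ᶠ[𝓝 a] id := by
  set h : E → E := (n : 𝕜)⁻¹ • ∑ j ∈ Finset.range n, f^[j]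
  have hh : HasStrictFDerivAt h (ContinuousLinearEquiv.refl 𝕜 E : E →L[𝕜] E) a := by
    convert (HasStrictFDerivAt.sum (u := Finset.range n) fun j _ => hf.iterate hfa j).const_smul
      (n : 𝕜)⁻¹ using 1
    rw [ContinuousLinearEquiv.coe_refl, ← ContinuousLinearMap.one_def]
    simp only [one_pow, Finset.sum_const, Finset.card_range]
    rw [← Nat.cast_smul_eq_nsmul 𝕜, smul_smul, inv_mul_cancel₀ (Nat.cast_ne_zero.2 hn), one_smul]
  have hhf : ∀ᶠ x in 𝓝 a, h (f x) = h x := by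
    filter_upwards [hper] with x hx
    have hsum := Finset.sum_range_succ' (fun j => f^[j] x) n
    rw [Finset.sum_range_succ, hx, iterate_zero_apply] at hsum
    simp only [h, Pi.smul_apply, Finset.sum_apply, ← iterate_succ_apply]
    rw [add_right_cancel hsum.symm]
  have hf_tendsto : Tendsto f (𝓝 a) (𝓝 a) := by
    simpa only [hfa] using hf.continuousAt.tendsto
  filter_upwards [hh.eventually_left_inverse, hf_tendsto.eventually hh.eventually_left_inverse,
    hhf] with x hx hfx hhfx
  rw [← hfx, hhfx, hx, id]

end Germ

namespace IsGermDiffSubgroup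

variable {k : ℕ} {S : Set ((𝓝 (0 : Fin k → ℂ)).Germ (Fin k → ℂ))}

noncomputable def derivSubmonoid (hS : IsGermDiffSubgroup k S) :
    Submonoid ((Fin k → ℂ) →L[ℂ] (Fin k → ℂ)) where
  carrier := germFDeriv ℂ '' S
  mul_mem' := by
    rintro _ _ ⟨g₁, hg₁, rfl⟩ ⟨g₂, hg₂, rfl⟩
    obtain ⟨f₁, -, rfl, hf₁, -, -, -, -, -⟩ := hS.holo g₁ hg₁
    obtain ⟨f₂, -, rfl, hf₂, hf₂0, -, -, -, -⟩ := hS.holo g₂ hg₂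
    refine ⟨germ0 k (f₁ ∘ f₂), hS.comp_mem f₁ f₂ hg₁ hg₂, ?_⟩
    exact fderiv_comp_of_eq hf₁.differentiableAt hf₂.differentiableAt hf₂0
  one_mem' := ⟨germ0 k id, hS.id_mem, fderiv_id⟩

theorem pow_eq_one_of_mem_derivSubmonoid (hS : IsGermDiffSubgroup k S) {n : ℕ}
    (hexp : ∀ f : (Fin k → ℂ) → (Fin k → ℂ), germ0 k f ∈ S → f^[n] =ᶠ[𝓝 0] id)
    {A : (Fin k → ℂ) →L[ℂ] (Fin k → ℂ)} (hA : A ∈ hS.derivSubmonoid) : A ^ n = 1 := by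
  obtain ⟨g, hg, rfl⟩ := hA
  obtain ⟨f, -, rfl, hf, hf0, -, -, -, -⟩ := hS.holo g hg
  change fderiv ℂ f 0 ^ n = 1
  rw [← (hf.differentiableAt.hasFDerivAt.iterate hf0 n).fderiv,
    (hexp f hg).fderiv_eq, fderiv_id, ContinuousLinearMap.one_def]

theorem injOn_germFDeriv (hS : IsGermDiffSubgroup k S) {n : ℕ} (hn : n ≠ 0)
    (hexp : ∀ f : (Fin k → ℂ) → (Fin k → ℂ), germ0 k f ∈ S → f^[n] =ᶠ[𝓝 0] id) :
    S.InjOn (germFDeriv ℂ) := by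
  intro g₁ hg₁ g₂ hg₂ hD
  obtain ⟨f₁, -, rfl, hf₁, hf₁0, -, -, -, -⟩ := hS.holo g₁ hg₁
  obtain ⟨f₂, f₂inv, rfl, hf₂, hf₂0, hinv, hinv0, hleft, hright⟩ := hS.holo g₂ hg₂
  replace hD : fderiv ℂ f₁ 0 = fderiv ℂ f₂ 0 := hD
  have hleft' : f₂inv ∘ f₂ =ᶠ[𝓝 0] id := hleft
  have hinv_comp : (fderiv ℂ f₂inv 0).comp (fderiv ℂ f₂ 0) = 1 := by
    rw [← fderiv_comp_of_eq hinv.differentiableAt hf₂.differentiableAt hf₂0, hleft'.fderiv_eq,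
      fderiv_id, ContinuousLinearMap.one_def]
  have hinv_at : HasStrictFDerivAt f₂inv (fderiv ℂ f₂inv 0) (f₁ 0) := by
    rw [hf₁0]
    exact hinv.hasStrictFDerivAt
  -- `f₂⁻¹ ∘ f₁ ∈ S` is tangent to the identity, hence is the identity.
  have htangent : HasStrictFDerivAt (f₂inv ∘ f₁) (1 : (Fin k → ℂ) →L[ℂ] (Fin k → ℂ)) 0 := by
    exact (hinv_at.comp 0 hf₁.hasStrictFDerivAt).congr_fderiv (by rw [hD, hinv_comp])
  have hid : f₂inv ∘ f₁ =ᶠ[𝓝 0] id :=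
    eventuallyEq_id_of_iterate_eventuallyEq_id hn (by simp [hf₁0, hinv0]) htangent
      (hexp _ (hS.comp_mem _ _ (hS.inv_mem f₂ f₂inv hg₂ hleft hright) hg₁))
  have hf₁_tendsto : Tendsto f₁ (𝓝 0) (𝓝 0) := by
    simpa only [hf₁0] using hf₁.continuousAt.tendsto
  refine Germ.coe_eq.2 ?_
  filter_upwards [hid, hf₁_tendsto.eventually hright] with x hx hfx
  exact hfx.symm.trans (congrArg f₂ hx)

end IsGermDiffSubgroup

theorem finite_of_germDiffSubgroup_unifBounded_periodic_orbits_general (k ℓ : ℕ)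
    (S : Set (Filter.Germ (nhds (0 : Fin k → ℂ)) (Fin k → ℂ)))
    (hS : IsGermDiffSubgroup k S)
    (hper : ∀ f : (Fin k → ℂ) → (Fin k → ℂ), germ0 k f ∈ S →
      ∀ᶠ x in nhds (0 : Fin k → ℂ), ∃ m, 1 ≤ m ∧ m ≤ ℓ ∧ f^[m] x = x) :
    S.Finite := by
  have hn : ℓ ! ≠ 0 := Nat.factorial_ne_zero ℓ
  have hexp : ∀ f : (Fin k → ℂ) → (Fin k → ℂ), germ0 k f ∈ S → f^[ℓ !] =ᶠ[𝓝 0] id :=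
    fun f hf => (hper f hf).mono fun x ⟨m, hm, hmℓ, hfx⟩ =>
      IsPeriodicPt.trans_dvd (f := f) hfx (Nat.dvd_factorial hm hmℓ)
  let toMatrix : ((Fin k → ℂ) →L[ℂ] (Fin k → ℂ)) →+* Matrix (Fin k) (Fin k) ℂ :=
    LinearMap.toMatrixAlgEquiv'.toRingHom.comp ContinuousLinearMap.toLinearMapRingHom
  have htoMatrix : Injective toMatrix :=
    LinearMap.toMatrixAlgEquiv'.injective.comp ContinuousLinearMap.coe_injective
  have hfin := Matrix.finite_of_pow_eq_one hn (hS.derivSubmonoid.map toMatrix) <| by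
    rintro _ ⟨A, hA, rfl⟩
    rw [← map_pow, hS.pow_eq_one_of_mem_derivSubmonoid hexp hA, map_one]
  rw [Submonoid.coe_map] at hfin
  exact (hfin.of_finite_image htoMatrix.injOn).of_finite_image (hS.injOn_germFDeriv hn hexp)

/-- A (not necessarily finitely generated) subgroup of germs of holomorphic
diffeomorphisms at `0 ∈ ℂᵏ` such that every point sufficiently close to `0` is
periodic of uniformly bounded order `≤ ℓ` for every element, is finite. -/
theorem finite_of_germDiffSubgroup_unifBounded_periodic_orbits (k ℓ : ℕ) (hℓ : 1 ≤ ℓ)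
    (S : Set (Filter.Germ (nhds (0 : Fin k → ℂ)) (Fin k → ℂ)))
    (hS : IsGermDiffSubgroup k S)
    (hper : ∀ f : (Fin k → ℂ) → (Fin k → ℂ), germ0 k f ∈ S →
      ∀ᶠ x in nhds (0 : Fin k → ℂ), ∃ m, 1 ≤ m ∧ m ≤ ℓ ∧ f^[m] x = x) :
    S.Finite :=
  finite_of_germDiffSubgroup_unifBounded_periodic_orbits_general k ℓ S hS hper
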